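/- Ekeland's variational principle: Let (X, d) be a complete metric space and F : X → [0, ∞] lower semicontinuous with inf F(X) < ∞. If ε > 0 and x ∈ X satisfy F(x) ≤ inf F(X) + ε, then there exists v ∈ X with d(x, v) ≤ √ε and F(v) ≤ F(w) + √ε · d(v, w) for all w ∈ X. -/

import Mathlib

/-!
Put `S z = {u | F u + L · d(z, u) ≤ F z}`. These sets are closed because `F` is lower
semicontinuous, and `u ∈ S z` implies `S u ⊆ S z` by the triangle inequality. Starting at `x`,
choose `u (n+1) ∈ S (u n)` minimizing `F` on `S (u n)` up to `L / (n+1)`. Every point of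
`S (u n)` then lies within `1 / n` of `u n`, so `u` is Cauchy, and its limit `v` lies in every
`S (u n)`. A point `w` with `F w + L · d(v, w) < F v` would lie in every `S (u n)` as well,
forcing `F v ≤ F w + L / n` for all `n`, which is absurd. With `L = √ε`, the membership
`v ∈ S x` gives `√ε · d(x, v) ≤ F x - F v ≤ ε`.
-/

open Filter Topology ENNReal

section Ekeland

variable {X : Type*} [PseudoEMetricSpace X]

def ekelandSet (F : X → ℝ≥0∞) (L : ℝ≥0∞) (z : X) : Set X :=
  {u | F u + L * edist z u ≤ F z}

variable {F : X → ℝ≥0∞} {L : ℝ≥0∞} {u : ℕ → X} {v w y z : X}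

@[simp]
theorem self_mem_ekelandSet : z ∈ ekelandSet F L z := by
  simp [ekelandSet]

theorem le_of_mem_ekelandSet (h : y ∈ ekelandSet F L z) : F y ≤ F z :=
  le_self_add.trans h

theorem ekelandSet_subset_of_mem (h : y ∈ ekelandSet F L z) :
    ekelandSet F L y ⊆ ekelandSet F L z := fun w hw =>
  calc F w + L * edist z w
      ≤ F w + L * (edist z y + edist y w) := by gcongr; exact edist_triangle z y w
    _ = (F w + L * edist y w) + L * edist z y := by ring
    _ ≤ F y + L * edist z y := by gcongr; exact hw
    _ ≤ F z := h

theorem LowerSemicontinuous.isClosed_ekelandSet (hF : LowerSemicontinuous F) (hL : L ≠ ∞)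
    (z : X) : IsClosed (ekelandSet F L z) :=
  (hF.add ((ENNReal.continuous_const_mul hL).comp
    (continuous_const.edist continuous_id)).lowerSemicontinuous).isClosed_preimage (F z)

theorem Set.Nonempty.exists_forall_le_add {α : Type*} {s : Set α} (hs : s.Nonempty)
    (f : α → ℝ≥0∞) {δ : ℝ≥0∞} (hδ : δ ≠ 0) : ∃ y ∈ s, ∀ u ∈ s, f y ≤ f u + δ := by
  by_cases htop : ⨅ u ∈ s, f u = ∞
  · obtain ⟨y, hy⟩ := hs
    refine ⟨y, hy, fun u hu => ?_⟩
    have hfu : f u = ∞ := top_le_iff.1 (htop ▸ iInf₂_le u hu)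
    simp [hfu]
  · obtain ⟨y, hy⟩ := iInf_lt_iff.1 (ENNReal.lt_add_right htop hδ)
    obtain ⟨hys, hlt⟩ := iInf_lt_iff.1 hy
    exact ⟨y, hys, fun u hu => hlt.le.trans (add_le_add_left (iInf₂_le u hu) _)⟩

def IsEkelandSeq (F : X → ℝ≥0∞) (L : ℝ≥0∞) (u : ℕ → X) : Prop :=
  ∀ n, u (n + 1) ∈ ekelandSet F L (u n) ∧
    ∀ y ∈ ekelandSet F L (u n), F (u (n + 1)) ≤ F y + L * ((n + 1 : ℕ) : ℝ≥0∞)⁻¹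

theorem exists_isEkelandSeq (hL0 : L ≠ 0) (x : X) : ∃ u, u 0 = x ∧ IsEkelandSeq F L u := by
  have hδ (n : ℕ) : L * ((n + 1 : ℕ) : ℝ≥0∞)⁻¹ ≠ 0 :=
    mul_ne_zero hL0 (ENNReal.inv_ne_zero.2 (natCast_ne_top _))
  choose step hstep using fun (n : ℕ) (z : X) =>
    Set.Nonempty.exists_forall_le_add ⟨z, self_mem_ekelandSet⟩ F (hδ n)
  exact ⟨fun n => Nat.rec x step n, rfl, fun n => hstep n _⟩

namespace IsEkelandSeq

variable (hu : IsEkelandSeq F L u)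
include hu

theorem antitone_ekelandSet : Antitone fun n => ekelandSet F L (u n) :=
  antitone_nat_of_succ_le fun n => ekelandSet_subset_of_mem (hu n).1

theorem mem_ekelandSet {m n : ℕ} (h : n ≤ m) : u m ∈ ekelandSet F L (u n) :=
  hu.antitone_ekelandSet h self_mem_ekelandSet

-- For `n = 0` the bound is `∞`, as `(0 : ℝ≥0∞)⁻¹ = ∞`.
theorem le_add_of_mem (hL0 : L ≠ 0) {n : ℕ} (hy : y ∈ ekelandSet F L (u n)) :
    F (u n) ≤ F y + L * (n : ℝ≥0∞)⁻¹ := by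
  cases n with
  | zero => simp [hL0]
  | succ n => exact (hu n).2 y (hu.antitone_ekelandSet n.le_succ hy)

theorem edist_le_of_mem (hL0 : L ≠ 0) (hL : L ≠ ∞) (hfin : F (u 0) ≠ ∞) {n : ℕ}
    (hy : y ∈ ekelandSet F L (u n)) : edist (u n) y ≤ (n : ℝ≥0∞)⁻¹ := by
  have hFy : F y ≠ ∞ :=
    ne_top_of_le_ne_top hfin <| le_of_mem_ekelandSet <|
      hu.antitone_ekelandSet n.zero_le hy
  rw [← ENNReal.mul_le_mul_iff_right hL0 hL, ← ENNReal.add_le_add_iff_left hFy]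
  exact le_trans hy (hu.le_add_of_mem hL0 hy)

theorem cauchySeq (hL0 : L ≠ 0) (hL : L ≠ ∞) (hfin : F (u 0) ≠ ∞) : CauchySeq u := by
  refine EMetric.cauchySeq_iff_le_tendsto_0.2
    ⟨fun N => (N : ℝ≥0∞)⁻¹ + (N : ℝ≥0∞)⁻¹, fun n m N hn hm => ?_, ?_⟩
  · exact (edist_triangle_left _ _ (u N)).trans <| add_le_add
      (hu.edist_le_of_mem hL0 hL hfin (hu.mem_ekelandSet hn))
      (hu.edist_le_of_mem hL0 hL hfin (hu.mem_ekelandSet hm))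
  · simpa using ENNReal.tendsto_inv_nat_nhds_zero.add ENNReal.tendsto_inv_nat_nhds_zero

theorem mem_ekelandSet_of_tendsto (hF : LowerSemicontinuous F) (hL : L ≠ ∞)
    (hv : Tendsto u atTop (𝓝 v)) (n : ℕ) : v ∈ ekelandSet F L (u n) :=
  (hF.isClosed_ekelandSet hL (u n)).mem_of_tendsto hv <|
    (eventually_ge_atTop n).mono fun _ => hu.mem_ekelandSet

theorem le_of_mem_ekelandSet_of_forall_mem (hL0 : L ≠ 0) (hL : L ≠ ∞)
    (hv : ∀ n, v ∈ ekelandSet F L (u n)) (hw : w ∈ ekelandSet F L v) : F v ≤ F w := by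
  have hlim : Tendsto (fun n : ℕ => F w + L * (n : ℝ≥0∞)⁻¹) atTop (𝓝 (F w)) := by
    simpa using tendsto_const_nhds.add
      (ENNReal.Tendsto.const_mul ENNReal.tendsto_inv_nat_nhds_zero (Or.inr hL))
  refine ge_of_tendsto' hlim fun n => ?_
  exact (le_of_mem_ekelandSet (hv n)).trans
    (hu.le_add_of_mem hL0 (ekelandSet_subset_of_mem (hv n) hw))

end IsEkelandSeq

theorem LowerSemicontinuous.exists_forall_le_add_mul_edist [CompleteSpace X]
    (hF : LowerSemicontinuous F) (hL0 : L ≠ 0) (hL : L ≠ ∞) {x : X} (hx : F x ≠ ∞) :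
    ∃ v, F v + L * edist x v ≤ F x ∧ ∀ w, F v ≤ F w + L * edist v w := by
  obtain ⟨u, rfl, hu⟩ := exists_isEkelandSeq (F := F) hL0 x
  obtain ⟨v, hv⟩ := cauchySeq_tendsto_of_complete (hu.cauchySeq hL0 hL hx)
  have hvS := hu.mem_ekelandSet_of_tendsto hF hL hv
  refine ⟨v, hvS 0, fun w => ?_⟩
  by_contra! hw
  exact (hw.trans_le (hu.le_of_mem_ekelandSet_of_forall_mem hL0 hL hvS hw.le)).not_ge
    le_self_add

end Ekeland

/-- Ekeland's variational principle: if `(X, d)` is a complete metric space,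
`F : X → [0, ∞]` is lower semicontinuous with finite infimum, `ε > 0` and
`F x ≤ inf F + ε`, then there is `v` with `d(x, v) ≤ √ε` and
`F v ≤ F w + √ε · d(v, w)` for all `w`. -/
theorem ekeland_variational_principle
    {X : Type*} [MetricSpace X] [CompleteSpace X]
    (F : X → ENNReal) (hF : LowerSemicontinuous F)
    (hinf : (⨅ y, F y) < ⊤)
    (ε : ℝ) (hε : 0 < ε) (x : X)
    (hx : F x ≤ (⨅ y, F y) + ENNReal.ofReal ε) :
    ∃ v : X, dist x v ≤ Real.sqrt ε ∧
      ∀ w : X, F v ≤ F w + ENNReal.ofReal (Real.sqrt ε * dist v w) := by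
  set L := ENNReal.ofReal (Real.sqrt ε)
  have hL0 : L ≠ 0 := by simpa [L] using hε
  have hε_eq : ENNReal.ofReal ε = L * L := by
    rw [← ENNReal.ofReal_mul (Real.sqrt_nonneg ε), Real.mul_self_sqrt hε.le]
  have hxfin : F x ≠ ∞ := (hx.trans_lt (ENNReal.add_lt_top.2 ⟨hinf, ofReal_lt_top⟩)).ne
  obtain ⟨v, hxv, hv⟩ := hF.exists_forall_le_add_mul_edist hL0 ofReal_ne_top hxfin
  refine ⟨v, ?_, fun w => ?_⟩
  · have hFv : F v ≠ ∞ := ne_top_of_le_ne_top hxfin (le_self_add.trans hxv)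
    have hLd : L * edist x v ≤ L * L := by
      rw [← hε_eq, ← ENNReal.add_le_add_iff_left hFv]
      exact hxv.trans (hx.trans (add_le_add_left (iInf_le F v) _))
    rw [← edist_le_ofReal (Real.sqrt_nonneg ε)]
    exact (ENNReal.mul_le_mul_iff_right hL0 ofReal_ne_top).1 hLd
  · rw [ENNReal.ofReal_mul (Real.sqrt_nonneg ε), ← edist_dist]
    exact hv w
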